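/- arXiv:1204.4873 — 6 statements merged into one kernel-verified Lean document; each statement's English description precedes it below -/
import Mathlib

section
/- Let T_H and T_A be finite abelian groups and let n ≥ r ≥ 0 be integers. Set H = ℤⁿ × T_H and A = ℤʳ × T_A. Let P ≤ GL_n(ℤ) be the subgroup of all invertible integer matrices of block form (Q₁ Q₂; 0 Q₃), where Q₁ has size (n−r)×(n−r) and Q₃ has size r×r. Let Γ = Epi(ℤ^{n−r} × T_H, T_A)/Aut(T_A), and let P act on Γ on the left by Q·[γ] = [γ ∘ (Q₁⁻¹ ⊕ id_{T_H})], where Q₁⁻¹ acts on the factor ℤ^{n−r}. Then there is a bijection between Γ(H, A) = Epi(H, A)/Aut(A) and the twisted product GL_n(ℤ) ×_P Γ, i.e., the quotient of the set GL_n(ℤ) × Γ by the equivalence relation generated by (M·Q, [γ]) ∼ (M, Q·[γ]) for all M ∈ GL_n(ℤ), Q ∈ P, [γ] ∈ Γ. -/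
/-- The set of surjective homomorphisms between two additive groups. -/
def EpiSet (G A : Type*) [AddGroup G] [AddGroup A] : Type _ :=
  {f : G →+ A // Function.Surjective f}

/-- Two epimorphisms are equivalent if they differ by an automorphism of the target. -/
def GammaRel (G A : Type*) [AddGroup G] [AddGroup A] (ν₁ ν₂ : EpiSet G A) : Prop :=
  ∃ α : A ≃+ A, ∀ g : G, α (ν₁.1 g) = ν₂.1 g

/-- The parameter set `Γ(G,A) = Epi(G,A)/Aut(A)`. -/
def GammaSet (G A : Type*) [AddGroup G] [AddGroup A] : Type _ :=
  Quot (GammaRel G A)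

/-- Membership in the parabolic subgroup `P ≤ GL_n(ℤ)`: the lower left `r × (n-r)`
block vanishes. -/
def InPar (n r : ℕ) (Q : Matrix.GeneralLinearGroup (Fin n) ℤ) : Prop :=
  ∀ i j : Fin n, n - r ≤ (i : ℕ) → (j : ℕ) < n - r →
    (Q : Matrix (Fin n) (Fin n) ℤ) i j = 0

/-- The inverse `Q₁⁻¹` of the upper-left `(n-r) × (n-r)` block of `Q`. -/
noncomputable def blockInv (n r : ℕ) (Q : Matrix.GeneralLinearGroup (Fin n) ℤ) :
    Matrix (Fin (n - r)) (Fin (n - r)) ℤ :=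
  (Matrix.of fun i j => (Q : Matrix (Fin n) (Fin n) ℤ)
    (Fin.castLE (Nat.sub_le n r) i) (Fin.castLE (Nat.sub_le n r) j))⁻¹

/-- The endomorphism `Q₁⁻¹ ⊕ id` of `ℤ^{n-r} × T_H`. -/
noncomputable def actHom (n r : ℕ) (T_H : Type*) [AddCommGroup T_H]
    (Q : Matrix.GeneralLinearGroup (Fin n) ℤ) :
    (Fin (n - r) → ℤ) × T_H →+ (Fin (n - r) → ℤ) × T_H :=
  AddMonoidHom.prodMap ((blockInv n r Q).mulVecLin.toAddMonoidHom)
    (AddMonoidHom.id T_H)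

/-- The relation generating the twisted product `GL_n(ℤ) ×_P Γ`:
`(M·Q, [γ]) ∼ (M, Q·[γ])` with `Q·[γ] = [γ ∘ (Q₁⁻¹ ⊕ id)]` for `Q ∈ P`. -/
def TwistRel (n r : ℕ) (T_H T_A : Type*) [AddCommGroup T_H] [AddCommGroup T_A]
    (p q : Matrix.GeneralLinearGroup (Fin n) ℤ ×
      GammaSet ((Fin (n - r) → ℤ) × T_H) T_A) : Prop :=
  ∃ (M Q : Matrix.GeneralLinearGroup (Fin n) ℤ)
    (γ δ : EpiSet ((Fin (n - r) → ℤ) × T_H) T_A),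
      InPar n r Q ∧ p.1 = M * Q ∧ p.2 = Quot.mk _ γ ∧
      q.1 = M ∧ q.2 = Quot.mk _ δ ∧ δ.1 = γ.1.comp (actHom n r T_H Q)

/-!
The bijection sends `(M, [γ])` to the class of `ν_{M,γ}(x, t) = (a, γ(z, t))`, where `(z, a)` are
the coordinates of `M⁻¹ x` in `ℤ^{n-r} × ℤʳ`. Replacing `(M Q, γ)` by `(M, γ ∘ (Q₁⁻¹ ⊕ id))` for
`Q ∈ P` changes `ν` by the automorphism `(a, s) ↦ (Q₃ a, s + γ(Q₁⁻¹ Q₂ a, 0))` of `A`, so the map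
descends to the twisted product. It is injective because an automorphism of `ℤʳ × T_A` preserves
the finite factor `T_A`, which forces `M'⁻¹ M ∈ P`. It is surjective because the `ℤʳ`-component
of an epimorphism `H → A` kills the finite group `T_H`, so it is a surjection `ℤⁿ → ℤʳ`; after a
change of basis of `ℤⁿ` this is the projection onto the last `r` coordinates, and a shear of `A`
removes the dependence of the `T_A`-component on those coordinates.
-/

open Matrix Function

theorem AddMonoidHom.eq_zero_of_finite {T X : Type*} [AddGroup T] [Finite T] [AddMonoid X]
    [IsAddTorsionFree X] (f : T →+ X) : f = 0 := by
  ext t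
  rw [AddMonoidHom.zero_apply,
    ← nsmul_eq_zero_iff_right (isOfFinAddOrder_of_finite t).addOrderOf_pos.ne', ← map_nsmul,
    addOrderOf_nsmul_eq_zero, map_zero]

theorem AddMonoidHom.fst_apply_zero_mk {X' T X Y : Type*} [AddCommGroup X'] [AddGroup T]
    [Finite T] [AddCommGroup X] [IsAddTorsionFree X] [AddCommGroup Y] (ν : X' × T →+ X × Y)
    (t : T) : (ν (0, t)).1 = 0 :=
  DFunLike.congr_fun
    ((AddMonoidHom.fst X Y).comp (ν.comp (AddMonoidHom.inr X' T))).eq_zero_of_finite t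

namespace AddEquiv

variable {X T : Type*} [AddCommGroup X] [IsAddTorsionFree X] [AddCommGroup T] [Finite T]

theorem mk_zero_snd_apply_zero (α : (X × T) ≃+ (X × T)) (s : T) :
    ((0 : X), (α (0, s)).2) = α (0, s) :=
  Prod.ext (α.toAddMonoidHom.fst_apply_zero_mk s).symm rfl

/-- The restriction of `α` to the factor `0 × T`, which `α` preserves. -/
def restrictFinite (α : (X × T) ≃+ (X × T)) : T ≃+ T where
  toFun s := (α (0, s)).2
  invFun s := (α.symm (0, s)).2
  left_inv s := by
    dsimp only
    rw [mk_zero_snd_apply_zero, symm_apply_apply]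
  right_inv s := by
    dsimp only
    rw [α.symm.mk_zero_snd_apply_zero, apply_symm_apply]
  map_add' s s' := by
    rw [← Prod.snd_add, ← map_add, Prod.mk_add_mk, add_zero]

theorem apply_zero_mk (α : (X × T) ≃+ (X × T)) (s : T) :
    α (0, s) = (0, α.restrictFinite s) :=
  (α.mk_zero_snd_apply_zero s).symm

end AddEquiv

theorem gammaRel_equivalence (G A : Type*) [AddGroup G] [AddGroup A] :
    Equivalence (GammaRel G A) where
  refl _ := ⟨AddEquiv.refl A, fun _ => rfl⟩
  symm := fun ⟨α, hα⟩ => ⟨α.symm, fun g => by rw [← hα g, AddEquiv.symm_apply_apply]⟩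
  trans := fun ⟨α, hα⟩ ⟨β, hβ⟩ =>
    ⟨α.trans β, fun g => by rw [AddEquiv.trans_apply, hα g, hβ g]⟩

theorem GammaSet.mk_eq_mk_iff {G A : Type*} [AddGroup G] [AddGroup A] {ν₁ ν₂ : EpiSet G A} :
    Quot.mk (GammaRel G A) ν₁ = Quot.mk _ ν₂ ↔ GammaRel G A ν₁ ν₂ :=
  Quot.eq.trans (gammaRel_equivalence G A).eqvGen_iff

section Splitting

variable {R : Type*} [Semiring R] {n r : ℕ} (hr : r ≤ n)

def finSplit : Fin (n - r) ⊕ Fin r ≃ Fin n :=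
  finSumFinEquiv.trans (finCongr (Nat.sub_add_cancel hr))

def splitEquiv : (Fin n → R) ≃ₗ[R] (Fin (n - r) → R) × (Fin r → R) :=
  (LinearEquiv.funCongrLeft R R (finSplit hr)).trans
    (LinearEquiv.sumArrowLequivProdArrow _ _ R R)

def blocks (Q : Matrix (Fin n) (Fin n) R) :
    Matrix (Fin (n - r) ⊕ Fin r) (Fin (n - r) ⊕ Fin r) R :=
  Q.submatrix (finSplit hr) (finSplit hr)

theorem splitEquiv_symm_apply (z : Fin (n - r) → R) (a : Fin r → R) :
    (splitEquiv hr).symm (z, a) = Sum.elim z a ∘ (finSplit hr).symm :=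
  rfl

theorem mulVec_splitEquiv_symm (Q : Matrix (Fin n) (Fin n) R) (z : Fin (n - r) → R)
    (a : Fin r → R) :
    Q *ᵥ (splitEquiv hr).symm (z, a) =
      (splitEquiv hr).symm
        ((blocks hr Q).toBlocks₁₁ *ᵥ z + (blocks hr Q).toBlocks₁₂ *ᵥ a,
          (blocks hr Q).toBlocks₂₁ *ᵥ z + (blocks hr Q).toBlocks₂₂ *ᵥ a) := by
  have := fromBlocks_mulVec (blocks hr Q).toBlocks₁₁ (blocks hr Q).toBlocks₁₂
    (blocks hr Q).toBlocks₂₁ (blocks hr Q).toBlocks₂₂ (Sum.elim z a)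
  rw [fromBlocks_toBlocks, blocks, submatrix_mulVec_equiv] at this
  rw [splitEquiv_symm_apply, splitEquiv_symm_apply, Equiv.eq_comp_symm]
  exact this

end Splitting

theorem exists_GL_apply_mulVec_splitEquiv_symm {R : Type*} [CommRing R] [IsDomain R]
    [IsPrincipalIdealRing R] {n r : ℕ} (hr : r ≤ n)
    (f : (Fin n → R) →ₗ[R] (Fin r → R)) (hf : Surjective f) :
    ∃ M : GL (Fin n) R, ∀ z a, f (M *ᵥ (splitEquiv hr).symm (z, a)) = a := by
  obtain ⟨s, hs⟩ := f.exists_rightInverse_of_surjective (LinearMap.range_eq_top.2 hf)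
  obtain ⟨e, he⟩ := f.exact_subtype_ker_map.splitSurjectiveEquiv
    (LinearMap.ker f).injective_subtype ⟨s, hs⟩
  have hfe : ∀ x, f x = (e x).2 := fun x => congr($(he.2) x)
  have hK : Module.finrank R (LinearMap.ker f) = Module.finrank R (Fin (n - r) → R) := by
    have := e.finrank_eq
    simp only [Module.finrank_prod, Module.finrank_fin_fun] at this ⊢
    omega
  let φ := e.trans ((LinearEquiv.ofFinrankEq _ _ hK).prodCongr (LinearEquiv.refl R _))
  set M : GL (Fin n) R := GeneralLinearGroup.toLin.symm
    (LinearMap.GeneralLinearGroup.ofLinearEquiv ((splitEquiv hr).trans φ.symm))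
  have hM : ∀ v, (M : Matrix _ _ R) *ᵥ v = φ.symm (splitEquiv hr v) := fun v => by
    rw [← mulVecLin_apply, ← GeneralLinearGroup.coe_toLin, MulEquiv.apply_symm_apply]
    rfl
  refine ⟨M, fun z a => ?_⟩
  rw [hM, hfe]
  simp [φ]

section Parabolic

variable {n r : ℕ} (hr : r ≤ n)

theorem blockInv_eq (Q : GL (Fin n) ℤ) :
    blockInv n r Q = (blocks hr (Q : Matrix _ _ ℤ)).toBlocks₁₁⁻¹ :=
  rfl

theorem inPar_iff (Q : GL (Fin n) ℤ) :
    InPar n r Q ↔ (blocks hr (Q : Matrix _ _ ℤ)).toBlocks₂₁ = 0 := by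
  constructor
  · intro hQ
    ext i j
    exact hQ _ _ (by simp [finSplit]) (by simp [finSplit])
  · intro h i j hi hj
    obtain ⟨i | i, rfl⟩ := (finSplit hr).surjective i
    · simp [finSplit] at hi; omega
    obtain ⟨j | j, rfl⟩ := (finSplit hr).surjective j
    · exact congrFun (congrFun h i) j
    · simp [finSplit] at hj

theorem isUnit_det_toBlocks {Q : GL (Fin n) ℤ} (hQ : InPar n r Q) :
    IsUnit (blocks hr (Q : Matrix _ _ ℤ)).toBlocks₁₁.det ∧
      IsUnit (blocks hr (Q : Matrix _ _ ℤ)).toBlocks₂₂.det := by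
  have h := isUnits_det_units Q
  rw [← det_submatrix_equiv_self (finSplit hr), ← blocks, ← fromBlocks_toBlocks (blocks hr _),
    (inPar_iff hr Q).1 hQ, det_fromBlocks_zero₂₁] at h
  exact ⟨isUnit_of_mul_isUnit_left h, isUnit_of_mul_isUnit_right h⟩

end Parabolic

section TwistedProduct

variable {n r : ℕ} (hr : r ≤ n) {T_H T_A : Type*} [AddCommGroup T_H] [AddCommGroup T_A]

/-- `ν_{M,γ}(x, t) = (a, γ(z, t))`, where `(z, a) ∈ ℤ^{n-r} × ℤʳ` are the coordinates of `M⁻¹ x`. -/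
noncomputable def nuHom (M : GL (Fin n) ℤ) (γ : (Fin (n - r) → ℤ) × T_H →+ T_A) :
    (Fin n → ℤ) × T_H →+ (Fin r → ℤ) × T_A :=
  AddMonoidHom.mk'
    (fun p => ((splitEquiv hr (↑M⁻¹ *ᵥ p.1)).2, γ ((splitEquiv hr (↑M⁻¹ *ᵥ p.1)).1, p.2)))
    (fun p q => by
      simp only [Prod.fst_add, Prod.snd_add, Prod.mk_add_mk, mulVec_add, map_add]
      rw [← map_add γ, Prod.mk_add_mk])

theorem nuHom_apply_mulVec (M : GL (Fin n) ℤ) (γ : (Fin (n - r) → ℤ) × T_H →+ T_A)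
    (z : Fin (n - r) → ℤ) (a : Fin r → ℤ) (t : T_H) :
    nuHom hr M γ ((M : Matrix _ _ ℤ) *ᵥ (splitEquiv hr).symm (z, a), t) = (a, γ (z, t)) := by
  simp [nuHom, mulVec_mulVec]

theorem exists_mulVec_splitEquiv_symm (M : GL (Fin n) ℤ) (x : Fin n → ℤ) :
    ∃ z a, (M : Matrix _ _ ℤ) *ᵥ (splitEquiv hr).symm (z, a) = x :=
  ⟨(splitEquiv hr (↑M⁻¹ *ᵥ x)).1, (splitEquiv hr (↑M⁻¹ *ᵥ x)).2, by
    simp [mulVec_mulVec]⟩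

theorem nuHom_surjective (M : GL (Fin n) ℤ) {γ : (Fin (n - r) → ℤ) × T_H →+ T_A}
    (hγ : Surjective γ) : Surjective (nuHom hr M γ) := by
  rintro ⟨a, s⟩
  obtain ⟨⟨z, t⟩, rfl⟩ := hγ s
  exact ⟨_, nuHom_apply_mulVec hr M γ z a t⟩

noncomputable def nuEpi (M : GL (Fin n) ℤ) (γ : EpiSet ((Fin (n - r) → ℤ) × T_H) T_A) :
    EpiSet ((Fin n → ℤ) × T_H) ((Fin r → ℤ) × T_A) :=
  ⟨nuHom hr M γ.1, nuHom_surjective hr M γ.2⟩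

theorem gammaRel_nuEpi_of_apply_mulVec {M : GL (Fin n) ℤ}
    {γ : EpiSet ((Fin (n - r) → ℤ) × T_H) T_A}
    {ν : EpiSet ((Fin n → ℤ) × T_H) ((Fin r → ℤ) × T_A)}
    (α : ((Fin r → ℤ) × T_A) ≃+ ((Fin r → ℤ) × T_A))
    (h : ∀ z a t,
      α (a, γ.1 (z, t)) = ν.1 ((M : Matrix _ _ ℤ) *ᵥ (splitEquiv hr).symm (z, a), t)) :
    GammaRel _ _ (nuEpi hr M γ) ν := by
  refine ⟨α, fun ⟨x, t⟩ => ?_⟩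
  obtain ⟨z, a, rfl⟩ := exists_mulVec_splitEquiv_symm hr M x
  rw [← h, nuEpi, nuHom_apply_mulVec]

theorem gammaRel_nuEpi_of_gammaRel (M : GL (Fin n) ℤ)
    {γ γ' : EpiSet ((Fin (n - r) → ℤ) × T_H) T_A} (h : GammaRel _ _ γ γ') :
    GammaRel _ _ (nuEpi hr M γ) (nuEpi hr M γ') := by
  obtain ⟨β, hβ⟩ := h
  refine gammaRel_nuEpi_of_apply_mulVec hr ((AddEquiv.refl _).prodCongr β) fun z a t => ?_
  rw [nuEpi, nuHom_apply_mulVec, ← hβ]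
  rfl

noncomputable def nuClass (p : GL (Fin n) ℤ × GammaSet ((Fin (n - r) → ℤ) × T_H) T_A) :
    GammaSet ((Fin n → ℤ) × T_H) ((Fin r → ℤ) × T_A) :=
  Quot.lift (fun γ => Quot.mk _ (nuEpi hr p.1 γ))
    (fun _ _ h => Quot.sound (gammaRel_nuEpi_of_gammaRel hr p.1 h)) p.2

theorem gammaRel_nuEpi_mul (M : GL (Fin n) ℤ) {Q : GL (Fin n) ℤ} (hQ : InPar n r Q)
    {γ δ : EpiSet ((Fin (n - r) → ℤ) × T_H) T_A}
    (hδ : δ.1 = γ.1.comp (actHom n r T_H Q)) :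
    GammaRel _ _ (nuEpi hr (M * Q) γ) (nuEpi hr M δ) := by
  obtain ⟨hA, hD⟩ := isUnit_det_toBlocks hr hQ
  set B := blocks hr (Q : Matrix _ _ ℤ)
  let φ : (Fin r → ℤ) →+ T_A := γ.1.comp ((AddMonoidHom.inl _ _).comp
    (B.toBlocks₁₁⁻¹ * B.toBlocks₁₂).mulVecLin.toAddMonoidHom)
  refine gammaRel_nuEpi_of_apply_mulVec hr (LinearEquiv.skewProd
    (B.toBlocks₂₂.toLinearEquiv' (B.toBlocks₂₂.invertibleOfIsUnitDet hD))
    (LinearEquiv.refl ℤ T_A) φ.toIntLinearMap).toAddEquiv fun z a t => ?_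
  rw [Units.val_mul, ← mulVec_mulVec, mulVec_splitEquiv_symm, (inPar_iff hr Q).1 hQ, nuEpi,
    nuHom_apply_mulVec, hδ]
  have hact : actHom n r T_H Q (B.toBlocks₁₁ *ᵥ z + B.toBlocks₁₂ *ᵥ a, t) =
      (z, t) + ((B.toBlocks₁₁⁻¹ * B.toBlocks₁₂) *ᵥ a, 0) := by
    simp [actHom, blockInv_eq hr, B, mulVec_add, mulVec_mulVec, nonsing_inv_mul _ hA]
  refine Prod.ext ?_ ?_
  · rw [zero_mulVec, zero_add]
    rfl
  · rw [AddMonoidHom.comp_apply, hact, map_add]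
    rfl

theorem nuClass_eq_of_twistRel
    {p q : GL (Fin n) ℤ × GammaSet ((Fin (n - r) → ℤ) × T_H) T_A}
    (h : TwistRel n r T_H T_A p q) : nuClass hr p = nuClass hr q := by
  obtain ⟨_, _⟩ := p
  obtain ⟨_, _⟩ := q
  obtain ⟨M, Q, γ, δ, hQ, rfl, rfl, rfl, rfl, hδ⟩ := h
  exact Quot.sound (gammaRel_nuEpi_mul hr _ hQ hδ)

noncomputable def twistedNu :
    Quot (TwistRel n r T_H T_A) → GammaSet ((Fin n → ℤ) × T_H) ((Fin r → ℤ) × T_A) :=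
  Quot.lift (nuClass hr) fun _ _ => nuClass_eq_of_twistRel hr

theorem inPar_of_gammaRel_nuEpi [Finite T_A] {M M' : GL (Fin n) ℤ}
    {γ γ' : EpiSet ((Fin (n - r) → ℤ) × T_H) T_A}
    (h : GammaRel _ _ (nuEpi hr M γ) (nuEpi hr M' γ')) :
    InPar n r (M'⁻¹ * M) ∧ ∃ β : T_A ≃+ T_A, ∀ z t,
      β (γ.1 (z, t)) = γ'.1 ((blocks hr (↑(M'⁻¹ * M) : Matrix _ _ ℤ)).toBlocks₁₁ *ᵥ z, t) := by
  obtain ⟨α, hα⟩ := h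
  set B := blocks hr (↑(M'⁻¹ * M) : Matrix _ _ ℤ)
  have key : ∀ z t, (0, α.restrictFinite (γ.1 (z, t))) =
      (B.toBlocks₂₁ *ᵥ z, γ'.1 (B.toBlocks₁₁ *ᵥ z, t)) := by
    intro z t
    have := hα ((M : Matrix _ _ ℤ) *ᵥ (splitEquiv hr).symm (z, 0), t)
    rwa [nuEpi, nuHom_apply_mulVec, α.apply_zero_mk, show M = M' * (M'⁻¹ * M) by group,
      Units.val_mul, ← mulVec_mulVec, mulVec_splitEquiv_symm, nuEpi, nuHom_apply_mulVec,
      mulVec_zero, add_zero, mulVec_zero, add_zero] at this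
  refine ⟨(inPar_iff hr _).2 (ext_of_mulVec_single fun i => ?_), α.restrictFinite,
    fun z t => congrArg Prod.snd (key z t)⟩
  rw [zero_mulVec]
  exact (congrArg Prod.fst (key _ 0)).symm

theorem twistedNu_injective [Finite T_A] :
    Injective (twistedNu hr (T_H := T_H) (T_A := T_A)) := by
  rintro ⟨M, ⟨γ⟩⟩ ⟨M', ⟨γ'⟩⟩ h
  obtain ⟨hQ, β, hβ⟩ := inPar_of_gammaRel_nuEpi hr (GammaSet.mk_eq_mk_iff.1 h)
  have hA := (isUnit_det_toBlocks hr hQ).1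
  have hβ' : ∀ w, β (γ.1 (actHom n r T_H (M'⁻¹ * M) w)) = γ'.1 w := fun ⟨w, t⟩ => by
    change β (γ.1 (blockInv n r (M'⁻¹ * M) *ᵥ w, t)) = _
    rw [hβ, blockInv_eq hr, mulVec_mulVec, mul_nonsing_inv _ hA, one_mulVec]
  let δ : EpiSet ((Fin (n - r) → ℤ) × T_H) T_A :=
    ⟨γ.1.comp (actHom n r T_H (M'⁻¹ * M)), fun s => by
      obtain ⟨w, hw⟩ := γ'.2 (β s)
      exact ⟨w, β.injective (by rw [AddMonoidHom.comp_apply, hβ', hw])⟩⟩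
  calc Quot.mk _ (M, Quot.mk _ γ) = Quot.mk _ (M', Quot.mk _ δ) :=
        Quot.sound ⟨M', M'⁻¹ * M, γ, δ, hQ, by group, rfl, rfl, rfl, rfl⟩
    _ = Quot.mk _ (M', Quot.mk _ γ') := by
        rw [Quot.sound (⟨β, hβ'⟩ : GammaRel _ _ δ γ')]

theorem exists_gammaRel_nuEpi [Finite T_H]
    (ν : EpiSet ((Fin n → ℤ) × T_H) ((Fin r → ℤ) × T_A)) :
    ∃ M γ, GammaRel _ _ (nuEpi hr M γ) ν := by
  have hν : ∀ x t, (ν.1 (x, t)).1 = (ν.1 (x, 0)).1 := fun x t => by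
    rw [show (x, t) = (x, 0) + (0, t) by simp, map_add, Prod.fst_add, ν.1.fst_apply_zero_mk,
      add_zero]
  let f := ((AddMonoidHom.fst _ _).comp
    (ν.1.comp (AddMonoidHom.inl (Fin n → ℤ) T_H))).toIntLinearMap
  have hf : Surjective f := fun a => by
    obtain ⟨⟨x, t⟩, hx⟩ := ν.2 (a, 0)
    exact ⟨x, (hν x t).symm.trans congr(Prod.fst $hx)⟩
  obtain ⟨M, hM⟩ := exists_GL_apply_mulVec_splitEquiv_symm hr f hf
  let ι : (Fin (n - r) → ℤ) × (Fin r → ℤ) →+ (Fin n → ℤ) :=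
    ((M : Matrix _ _ ℤ).mulVecLin ∘ₗ (splitEquiv hr).symm.toLinearMap).toAddMonoidHom
  let γ₀ : (Fin (n - r) → ℤ) × T_H →+ T_A :=
    (AddMonoidHom.snd _ _).comp (ν.1.comp ((ι.comp (AddMonoidHom.inl _ _)).prodMap (.id T_H)))
  let ψ : (Fin r → ℤ) →+ T_A := (AddMonoidHom.snd _ _).comp
    (ν.1.comp ((AddMonoidHom.inl _ _).comp (ι.comp (AddMonoidHom.inr _ _))))
  have key : ∀ z a t, ν.1 ((M : Matrix _ _ ℤ) *ᵥ (splitEquiv hr).symm (z, a), t) =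
      (a, γ₀ (z, t) + ψ a) := fun z a t => by
    have hsplit : ((M : Matrix _ _ ℤ) *ᵥ (splitEquiv hr).symm (z, a), t) =
        (ι (z, 0), t) + (ι (0, a), 0) := by
      simp [ι, ← mulVec_add, ← map_add]
    rw [hsplit, map_add]
    refine Prod.ext ?_ rfl
    rw [Prod.fst_add, hν]
    exact (congrArg₂ (· + ·) (hM z 0) (hM 0 a)).trans (zero_add a)
  have hγ₀ : Surjective γ₀ := fun s => by
    obtain ⟨⟨x, t⟩, hx⟩ := ν.2 (0, s)
    obtain ⟨z, a, rfl⟩ := exists_mulVec_splitEquiv_symm hr M x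
    obtain ⟨rfl, hs⟩ := Prod.ext_iff.1 ((key z a t).symm.trans hx)
    exact ⟨(z, t), by simpa using hs⟩
  refine ⟨M, ⟨γ₀, hγ₀⟩, gammaRel_nuEpi_of_apply_mulVec hr (LinearEquiv.skewProd
    (.refl ℤ _) (.refl ℤ T_A) ψ.toIntLinearMap).toAddEquiv fun z a t => ?_⟩
  rw [key]
  rfl

theorem twistedNu_surjective [Finite T_H] :
    Surjective (twistedNu hr (T_H := T_H) (T_A := T_A)) := by
  rintro ⟨ν⟩
  obtain ⟨M, γ, h⟩ := exists_gammaRel_nuEpi hr ν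
  exact ⟨Quot.mk _ (M, Quot.mk _ γ), Quot.sound h⟩

end TwistedProduct

/-- The parameter set `Γ(H, A)` for `H = ℤⁿ × T_H` and `A = ℤʳ × T_A` is in bijection
with the twisted product `GL_n(ℤ) ×_P Γ`, where `Γ = Γ(ℤ^{n-r} × T_H, T_A)`. -/
theorem statement2 (n r : ℕ) (hr : r ≤ n) (T_H T_A : Type)
    [AddCommGroup T_H] [Finite T_H] [AddCommGroup T_A] [Finite T_A] :
    Nonempty (GammaSet ((Fin n → ℤ) × T_H) ((Fin r → ℤ) × T_A) ≃
      Quot (TwistRel n r T_H T_A)) :=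
  ⟨(Equiv.ofBijective (twistedNu hr) ⟨twistedNu_injective hr, twistedNu_surjective hr⟩).symm⟩
end

section
/- Let p be a prime and let m, s, t be nonnegative integers. Then the quotient set Epi(ℤ^m × (ℤ/p)^s, (ℤ/p)^t)/Aut((ℤ/p)^t) is in bijection with the set of t-dimensional 𝔽_p-linear subspaces of the vector space 𝔽_p^{m+s}. (This identifies the fiber set Γ = Γ(H/Ā, A/Ā) appearing in the twisted-product description of Γ(H, A), for H = ℤⁿ × (ℤ/p)^s and A = ℤʳ × (ℤ/p)^t with r ≤ n and m = n − r, with the Grassmannian of t-planes in 𝔽_p^{n−r+s}.) -/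
/-!
Every homomorphism `ℤᵐ × 𝔽_pˢ → 𝔽_pᵗ` factors through reduction mod `p` onto
`V = 𝔽_pᵐ × 𝔽_pˢ`, so `Γ` does not change when the source is replaced by `V`. Over `𝔽_p`
additive maps are linear, and two epimorphisms `V → 𝔽_pᵗ` differ by an automorphism exactly
when they have the same kernel; hence `Γ(V, 𝔽_pᵗ)` is the set of codimension-`t` subspaces
of `V`. Dual annihilators turn these into the `t`-dimensional subspaces of `V* ≅ 𝔽_p^{m+s}`.
-/

open Module

theorem LinearMap.exists_linearEquiv_apply_eq_of_ker_eq {R M N₁ N₂ : Type*} [Ring R]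
    [AddCommGroup M] [AddCommGroup N₁] [AddCommGroup N₂] [Module R M] [Module R N₁]
    [Module R N₂] (f : M →ₗ[R] N₁) (g : M →ₗ[R] N₂) (hf : Function.Surjective f)
    (hg : Function.Surjective g) (h : ker f = ker g) : ∃ e : N₁ ≃ₗ[R] N₂, ∀ x, e (f x) = g x :=
  ⟨(f.quotKerEquivOfSurjective hf).symm ≪≫ₗ Submodule.quotEquivOfEq _ _ h ≪≫ₗ
    g.quotKerEquivOfSurjective hg, fun x => by simp⟩

noncomputable def Subspace.codimEquivDualDim {K V : Type*} [Field K] [AddCommGroup V]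
    [Module K V] [FiniteDimensional K V] (t : ℕ) :
    {W : Submodule K V // finrank K (V ⧸ W) = t} ≃
      {U : Submodule K (Dual K V) // finrank K U = t} :=
  (Subspace.orderIsoFiniteDimensional (K := K) (V := V)).toEquiv.subtypeEquiv fun W => by
    show _ ↔ finrank K W.dualAnnihilator = t
    rw [(Subspace.quotEquivAnnihilator W).finrank_eq]

noncomputable def Submodule.finrankEqEquivOfLinearEquiv {K M N : Type*} [Field K]
    [AddCommGroup M] [Module K M] [AddCommGroup N] [Module K N] (e : M ≃ₗ[K] N) (t : ℕ) :
    {U : Submodule K M // finrank K U = t} ≃ {U : Submodule K N // finrank K U = t} :=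
  (Submodule.orderIsoMapComap e).toEquiv.subtypeEquiv fun U => by
    show _ ↔ finrank K (U.map (e : M →ₗ[K] N)) = t
    rw [LinearEquiv.finrank_map_eq]

theorem AddMonoidHom.exists_comp_intCast_compLeft (n : ℕ) {ι M : Type*} [Fintype ι]
    [AddCommGroup M] [Module (ZMod n) M] (f : (ι → ℤ) →+ M) :
    ∃ g : (ι → ZMod n) →+ M, g.comp ((Int.castAddHom (ZMod n)).compLeft ι) = f := by
  classical
  refine ⟨(Fintype.linearCombination (ZMod n) fun i => f (Pi.single i 1)).toAddMonoidHom, ?_⟩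
  refine AddMonoidHom.functions_ext _ _ _ fun i x => ?_
  calc _ = Fintype.linearCombination (ZMod n) (fun j => f (Pi.single j 1))
          (Pi.single i (x : ZMod n)) := by
        simp only [AddMonoidHom.coe_comp, Function.comp_apply, LinearMap.toAddMonoidHom_coe]
        congr 1
        ext j
        by_cases h : j = i <;> simp [h]
    _ = (x : ZMod n) • f (Pi.single i 1) := by
        simp [Fintype.linearCombination_apply, Pi.single_apply]
    _ = f (Pi.single i x) := by
        rw [Int.cast_smul_eq_zsmul, ← map_zsmul, ← Pi.single_smul, smul_eq_mul, mul_one]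

theorem AddMonoidHom.exists_comp_prodMap_eq {G₁ G₂ H₁ H₂ M : Type*} [AddCommGroup G₁]
    [AddCommGroup G₂] [AddCommGroup H₁] [AddCommGroup H₂] [AddCommGroup M]
    {π₁ : G₁ →+ H₁} {π₂ : G₂ →+ H₂} (h₁ : ∀ f : G₁ →+ M, ∃ g : H₁ →+ M, g.comp π₁ = f)
    (h₂ : ∀ f : G₂ →+ M, ∃ g : H₂ →+ M, g.comp π₂ = f) (f : G₁ × G₂ →+ M) :
    ∃ g : H₁ × H₂ →+ M, g.comp (π₁.prodMap π₂) = f := by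
  obtain ⟨g₁, hg₁⟩ := h₁ (f.comp (AddMonoidHom.inl G₁ G₂))
  obtain ⟨g₂, hg₂⟩ := h₂ (f.comp (AddMonoidHom.inr G₁ G₂))
  refine ⟨g₁.coprod g₂, ?_⟩
  rw [← f.coprod_unique, ← hg₁, ← hg₂]
  rfl

namespace GammaSet

section Precomp

variable {G H A : Type*} [AddGroup G] [AddGroup H] [AddGroup A]

theorem gammaRel_comp_iff (π : G →+ H) (hπ : Function.Surjective π) (ν₁ ν₂ : EpiSet H A) :
    GammaRel G A ⟨ν₁.1.comp π, ν₁.2.comp hπ⟩ ⟨ν₂.1.comp π, ν₂.2.comp hπ⟩ ↔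
      GammaRel H A ν₁ ν₂ := by
  simp only [GammaRel, AddMonoidHom.coe_comp, Function.comp_apply, hπ.forall]

noncomputable def equivOfSurjective (π : G →+ H) (hπ : Function.Surjective π)
    (hfac : ∀ f : G →+ A, ∃ g : H →+ A, g.comp π = f) : GammaSet H A ≃ GammaSet G A := by
  refine Quot.congr (Equiv.ofBijective (fun ν => ⟨ν.1.comp π, ν.2.comp hπ⟩) ⟨?_, ?_⟩)
    fun ν₁ ν₂ => (gammaRel_comp_iff π hπ ν₁ ν₂).symm
  · intro ν₁ ν₂ h
    exact Subtype.ext ((AddMonoidHom.cancel_right hπ).mp (congrArg Subtype.val h))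
  · rintro ⟨f, hf⟩
    obtain ⟨g, rfl⟩ := hfac f
    exact ⟨⟨g, Function.Surjective.of_comp (f := g) (g := π) hf⟩, rfl⟩

end Precomp

section Kernel

variable (p : ℕ) [Fact p.Prime] {V A : Type*} [AddCommGroup V] [Module (ZMod p) V]
  [AddCommGroup A] [Module (ZMod p) A]

theorem gammaRel_iff_ker_eq (ν₁ ν₂ : EpiSet V A) :
    GammaRel V A ν₁ ν₂ ↔
      LinearMap.ker (ν₁.1.toZModLinearMap p) = LinearMap.ker (ν₂.1.toZModLinearMap p) := by
  constructor
  · rintro ⟨α, hα⟩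
    ext v
    simp [← hα]
  · intro h
    obtain ⟨e, he⟩ := LinearMap.exists_linearEquiv_apply_eq_of_ker_eq _ _ ν₁.2 ν₂.2 h
    exact ⟨e.toAddEquiv, he⟩

theorem finrank_quotient_ker (ν : EpiSet V A) :
    finrank (ZMod p) (V ⧸ LinearMap.ker (ν.1.toZModLinearMap p)) = finrank (ZMod p) A :=
  ((ν.1.toZModLinearMap p).quotKerEquivOfSurjective ν.2).finrank_eq

noncomputable def equivKer [Module.Finite (ZMod p) V] [Module.Finite (ZMod p) A] :
    GammaSet V A ≃
      {W : Submodule (ZMod p) V // finrank (ZMod p) (V ⧸ W) = finrank (ZMod p) A} := by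
  refine Equiv.ofBijective (Quot.lift (fun ν => ⟨_, finrank_quotient_ker p ν⟩)
    fun ν₁ ν₂ h => Subtype.ext ((gammaRel_iff_ker_eq p ν₁ ν₂).mp h)) ⟨?_, ?_⟩
  · rintro ⟨ν₁⟩ ⟨ν₂⟩ h
    exact Quot.sound ((gammaRel_iff_ker_eq p ν₁ ν₂).mpr (congrArg Subtype.val h))
  · rintro ⟨W, hW⟩
    let e := LinearEquiv.ofFinrankEq _ _ hW
    refine ⟨Quot.mk _ ⟨(e.toLinearMap ∘ₗ W.mkQ).toAddMonoidHom,
      e.surjective.comp W.mkQ_surjective⟩, Subtype.ext ?_⟩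
    change LinearMap.ker (e.toLinearMap ∘ₗ W.mkQ) = W
    rw [LinearMap.ker_comp, LinearEquiv.ker, Submodule.comap_bot, Submodule.ker_mkQ]

end Kernel

end GammaSet

/-- `Epi(ℤᵐ × (ℤ/p)ˢ, (ℤ/p)ᵗ)/Aut((ℤ/p)ᵗ)` is in bijection with the Grassmannian of
`t`-dimensional `𝔽_p`-subspaces of `𝔽_p^{m+s}`. -/
theorem statement4 (p : ℕ) [Fact p.Prime] (m s t : ℕ) :
    Nonempty (GammaSet ((Fin m → ℤ) × (Fin s → ZMod p)) (Fin t → ZMod p) ≃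
      {W : Submodule (ZMod p) (Fin (m + s) → ZMod p) // Module.finrank (ZMod p) W = t}) := by
  let π : ((Fin m → ℤ) × (Fin s → ZMod p)) →+ ((Fin m → ZMod p) × (Fin s → ZMod p)) :=
    ((Int.castAddHom (ZMod p)).compLeft (Fin m)).prodMap (AddMonoidHom.id _)
  have hπ : Function.Surjective π :=
    ZMod.intCast_surjective.comp_left.prodMap Function.surjective_id
  have hfac (f : ((Fin m → ℤ) × (Fin s → ZMod p)) →+ (Fin t → ZMod p)) :
      ∃ g : ((Fin m → ZMod p) × (Fin s → ZMod p)) →+ (Fin t → ZMod p), g.comp π = f :=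
    AddMonoidHom.exists_comp_prodMap_eq (AddMonoidHom.exists_comp_intCast_compLeft p)
      (fun f => ⟨f, rfl⟩) f
  let ℓ : Dual (ZMod p) ((Fin m → ZMod p) × (Fin s → ZMod p)) ≃ₗ[ZMod p]
      (Fin (m + s) → ZMod p) :=
    LinearEquiv.ofFinrankEq _ _ (by simp)
  exact ⟨(GammaSet.equivOfSurjective π hπ hfac).symm.trans <| (GammaSet.equivKer p).trans <|
    (Subspace.codimEquivDualDim _).trans <| (Submodule.finrankEqEquivOfLinearEquiv ℓ _).trans <|
    Equiv.subtypeEquivRight fun W => by simp⟩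
end

section
/- Let G, Q, A be groups and let φ : G → Q and ν : Q → A be surjective group homomorphisms. If the ℚ-vector space (Abelianization(ker ν)) ⊗_ℤ ℚ is infinite-dimensional, then (Abelianization(ker(ν ∘ φ))) ⊗_ℤ ℚ is infinite-dimensional as well. (This expresses that the complement of the Dwyer–Fried set Ω¹_A(Q) maps into the complement of Ω¹_A(G) under composition with φ.) -/
open scoped TensorProduct

theorem Abelianization.map_surjective {G H : Type*} [Group G] [Group H] {f : G →* H}
    (hf : Function.Surjective f) : Function.Surjective (Abelianization.map f) := by
  intro x
  obtain ⟨y, rfl⟩ := QuotientGroup.mk'_surjective _ x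
  obtain ⟨z, rfl⟩ := hf y
  exact ⟨Abelianization.of z, rfl⟩

theorem Module.Finite.baseChange_of_surjective {R S M N : Type*} [CommSemiring R] [Semiring S]
    [Algebra R S] [AddCommMonoid M] [AddCommMonoid N] [Module R M] [Module R N]
    [Module.Finite S (S ⊗[R] M)] {f : M →ₗ[R] N} (hf : Function.Surjective f) :
    Module.Finite S (S ⊗[R] N) :=
  .of_surjective (f.baseChange S) <| by
    rw [LinearMap.baseChange_eq_ltensor]
    exact LinearMap.lTensor_surjective S hf

theorem Abelianization.finite_tensor_of_surjective {S G H : Type*} [Ring S] [Group G] [Group H]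
    {f : G →* H} (hf : Function.Surjective f)
    [Module.Finite S (S ⊗[ℤ] Additive (Abelianization G))] :
    Module.Finite S (S ⊗[ℤ] Additive (Abelianization H)) :=
  Module.Finite.baseChange_of_surjective
    (f := (Abelianization.map f).toAdditive.toIntLinearMap) (map_surjective hf)

theorem statement5_general {G Q A : Type*} [Group G] [Group Q] [Group A]
    (φ : G →* Q) (hφ : Function.Surjective φ)
    (ν : Q →* A)
    (h : ¬ Module.Finite ℚ (ℚ ⊗[ℤ] Additive (Abelianization ↥ν.ker))) :
    ¬ Module.Finite ℚ (ℚ ⊗[ℤ] Additive (Abelianization ↥(ν.comp φ).ker)) := by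
  intro hfin
  -- `(ν.comp φ).ker` is `ν.ker.comap φ` by definition, so `φ` restricts to a surjection onto `ν.ker`.
  have : Module.Finite ℚ (ℚ ⊗[ℤ] Additive (Abelianization (ν.ker.comap φ))) := hfin
  exact h (Abelianization.finite_tensor_of_surjective
    (φ.subgroupComap_surjective_of_surjective ν.ker hφ))

/-- If `φ : G → Q` and `ν : Q → A` are surjective group homomorphisms and the
rationalized abelianization of `ker ν` is infinite-dimensional over `ℚ`, then so is the
rationalized abelianization of `ker (ν ∘ φ)`. -/
theorem statement5 {G Q A : Type*} [Group G] [Group Q] [Group A]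
    (φ : G →* Q) (hφ : Function.Surjective φ)
    (ν : Q →* A) (hν : Function.Surjective ν)
    (h : ¬ Module.Finite ℚ (ℚ ⊗[ℤ] Additive (Abelianization ↥ν.ker))) :
    ¬ Module.Finite ℚ (ℚ ⊗[ℤ] Additive (Abelianization ↥(ν.comp φ).ker)) :=
  statement5_general φ hφ ν h
end

section
/- Let H be a finitely generated abelian group with character group Ĥ, and let W ⊆ Ĥ be Zariski closed. Then for every integer d ≥ 1, the set of subgroups Ξ_d(W) is finite. -/
open scoped TensorProduct Pointwise

/-- The character group of an (additively written) abelian group. -/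
abbrev CharGp (H : Type*) [AddCommGroup H] : Type _ := Multiplicative H →* ℂˣ

/-- `V(ξ)`, the set of characters vanishing (i.e. taking value 1) on a subgroup `ξ`. -/
def charV {H : Type*} [AddCommGroup H] (ξ : AddSubgroup H) : Set (CharGp H) :=
  {ρ | ∀ x ∈ ξ, ρ (Multiplicative.ofAdd x) = 1}

/-- The primitive closure of a subgroup of an abelian group. -/
def pclose {H : Type*} [AddCommGroup H] (ξ : AddSubgroup H) : AddSubgroup H where
  carrier := {x | ∃ m : ℕ, 0 < m ∧ m • x ∈ ξ}
  zero_mem' := ⟨1, Nat.one_pos, by simpa using ξ.zero_mem⟩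
  add_mem' := by
    rintro a b ⟨m, hm, ha⟩ ⟨k, hk, hb⟩
    refine ⟨m * k, Nat.mul_pos hm hk, ?_⟩
    rw [smul_add]
    exact ξ.add_mem (by rw [mul_comm, mul_smul]; exact ξ.nsmul_mem ha k)
      (by rw [mul_smul]; exact ξ.nsmul_mem hb m)
  neg_mem' := by
    rintro a ⟨m, hm, ha⟩
    exact ⟨m, hm, by rw [smul_neg]; exact ξ.neg_mem ha⟩

/-- A subgroup is primitive if it equals its primitive closure. -/
def IsPrimitiveSub {H : Type*} [AddCommGroup H] (ξ : AddSubgroup H) : Prop :=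
  pclose ξ = ξ

/-- The determinant group `ξ̄/ξ` of a subgroup. -/
def detGroup {H : Type*} [AddCommGroup H] (ξ : AddSubgroup H) : Type _ :=
  ↥(pclose ξ) ⧸ ξ.addSubgroupOf (pclose ξ)

noncomputable instance {H : Type*} [AddCommGroup H] (ξ : AddSubgroup H) :
    AddCommGroup (detGroup ξ) := by unfold detGroup; infer_instance

/-- The rank of a f.g. abelian group, `dim_ℚ (B ⊗ ℚ)`. -/
noncomputable def rkOf (B : Type*) [AddCommGroup B] : ℕ :=
  Module.finrank ℚ (ℚ ⊗[ℤ] B)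

/-- The largest order of an element of `K`. -/
noncomputable def maxOrder (K : Type*) [AddGroup K] : ℕ :=
  sSup (Set.range fun g : K => addOrderOf g)

/-- The translate `η·V(ξ)` of the "subtorus" `V(ξ)` by the character `η`. -/
def transTorus {H : Type*} [AddCommGroup H] (η : CharGp H) (ξ : AddSubgroup H) :
    Set (CharGp H) :=
  (η * ·) '' charV ξ

/-- `S` is a maximal positive-dimensional torsion-translated subtorus inside `W`. -/
def MaxTransTorusIn {H : Type*} [AddCommGroup H] (S W : Set (CharGp H)) : Prop :=
  S.Infinite ∧ S ⊆ W ∧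
    ∀ (χ : AddSubgroup H) (η' : CharGp H), IsPrimitiveSub χ → IsOfFinOrder η' →
      S ⊆ transTorus η' χ → transTorus η' χ ⊆ W → transTorus η' χ = S

/-- The collection `Ξ_d(W)` of subgroups of `H` attached to a subvariety `W` of the
character group. -/
def Xi {H : Type*} [AddCommGroup H] (d : ℕ) (W : Set (CharGp H)) : Set (AddSubgroup H) :=
  {ξ | IsAddCyclic (detGroup ξ) ∧ Nat.card (detGroup ξ) ∣ d ∧
    ∃ η : CharGp H, IsOfFinOrder η ∧ orderOf η = Nat.card (detGroup ξ) ∧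
      (∀ x ∈ ξ, η (Multiplicative.ofAdd x) = 1) ∧
      {x : H | x ∈ pclose ξ ∧ η (Multiplicative.ofAdd x) = 1} = (ξ : Set H) ∧
      MaxTransTorusIn (transTorus η (pclose ξ)) W}

/-- Evaluation of an element of the group algebra `ℂ[H]` at a character, i.e. the
`ℂ`-algebra homomorphism `ℂ[H] → ℂ` extending the character. -/
noncomputable def evalAt {H : Type*} [AddCommGroup H] (ρ : CharGp H) :
    AddMonoidAlgebra ℂ H →ₐ[ℂ] ℂ :=
  AddMonoidAlgebra.lift ℂ ℂ H ((Units.coeHom ℂ).comp ρ)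

/-- `W` is a Zariski closed subset of the character group. -/
def IsZarClosed {H : Type*} [AddCommGroup H] (W : Set (CharGp H)) : Prop :=
  ∃ S : Set (AddMonoidAlgebra ℂ H), W = {ρ | ∀ f ∈ S, evalAt ρ f = 0}

/-- The support of a module: the set of maximal ideals at which the localization is
nonzero. -/
def suppMax (S M : Type*) [CommRing S] [AddCommGroup M] [Module S M] :
    Set (MaximalSpectrum S) :=
  {m | haveI := m.isMaximal.isPrime; Nontrivial (LocalizedModule m.asIdeal.primeCompl M)}

/-!
A Zariski closed `W` is the common zero set `Z(F)` of finitely many `f ∈ ℂ[H]`, since `ℂ[H]` is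
Noetherian. Characters separate the points of `H ⧸ χ`, so by Dedekind's lemma an element of
`ℂ[H ⧸ χ]` vanishing at every character is zero; hence `η V(χ) ⊆ Z(f)` exactly when, on every
coset of `χ`, the `η`-twisted coefficients of `f` sum to zero. This condition only sees the
differences of exponents of `f` that lie in `χ`. So if `η V(ξ̄)` is maximal in `Z(F)`, then `ξ̄` is
the primitive closure of the group generated by the exponent differences of `F` lying in it, which
leaves finitely many candidates for `ξ̄`. Finally `d • ξ̄ ≤ ξ ≤ ξ̄` and `ξ̄ ⧸ d • ξ̄` is finite.
-/

section

open AddMonoidAlgebra (mapDomain)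

variable {H : Type*} [AddCommGroup H]

lemma le_pclose (ξ : AddSubgroup H) : ξ ≤ pclose ξ :=
  fun x hx => ⟨1, Nat.one_pos, by simpa using hx⟩

lemma pclose_mono {ξ χ : AddSubgroup H} (h : ξ ≤ χ) : pclose ξ ≤ pclose χ := by
  rintro x ⟨m, hm, hx⟩
  exact ⟨m, hm, h hx⟩

lemma isPrimitiveSub_pclose (ξ : AddSubgroup H) : IsPrimitiveSub (pclose ξ) := by
  refine le_antisymm ?_ (le_pclose _)
  rintro x ⟨m, hm, k, hk, hx⟩
  exact ⟨k * m, Nat.mul_pos hk hm, by rwa [mul_smul]⟩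

/-- The embedding `ℚ/ℤ ↪ ℂˣ`, `q ↦ exp (2πiq)`. -/
noncomputable def ratCircleToUnits : AddCircle (1 : ℚ) →+ Additive ℂˣ :=
  QuotientAddGroup.lift _
    ((AddMonoidHom.mk' (fun x : AddCircle (1 : ℝ) => Additive.ofMul (Circle.toUnits x.toCircle))
        fun x y => by simp [AddCircle.toCircle_add]).comp
      ((QuotientAddGroup.mk' _).comp (Rat.castHom ℝ).toAddMonoidHom))
    (by
      rintro _ ⟨n, rfl⟩
      have h : ((n : ℝ) : AddCircle (1 : ℝ)) = 0 :=
        (AddCircle.coe_eq_zero_iff 1).2 ⟨n, by simp⟩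
      simp [h])

lemma ratCircleToUnits_injective : Function.Injective ratCircleToUnits := by
  refine (injective_iff_map_eq_zero _).2 fun q hq => ?_
  induction q using QuotientAddGroup.induction_on with
  | H q =>
    have h : AddCircle.toCircle ((q : ℝ) : AddCircle (1 : ℝ)) = 1 :=
      Circle.ext (by simpa [ratCircleToUnits, Units.ext_iff] using hq)
    rw [← AddCircle.toCircle_zero, (AddCircle.injective_toCircle one_ne_zero).eq_iff,
      AddCircle.coe_eq_zero_iff] at h
    obtain ⟨n, hn⟩ := h
    exact (AddCircle.coe_eq_zero_iff _).2 ⟨n, by rw [zsmul_one] at hn ⊢; exact_mod_cast hn⟩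

lemma exists_charGp_apply_ne_one {x : H} (hx : x ≠ 0) :
    ∃ ρ : CharGp H, ρ (Multiplicative.ofAdd x) ≠ 1 := by
  obtain ⟨c, hc⟩ := CharacterModule.exists_character_apply_ne_zero_of_ne_zero hx
  refine ⟨AddMonoidHom.toMultiplicativeLeft (ratCircleToUnits.comp c), fun h => hc ?_⟩
  exact ratCircleToUnits_injective (by rw [map_zero]; exact congrArg Additive.ofMul h)

def charGpPullback (χ : AddSubgroup H) (τ : CharGp (H ⧸ χ)) : CharGp H :=
  τ.comp (QuotientAddGroup.mk' χ).toMultiplicative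

lemma charV_eq_range_charGpPullback (χ : AddSubgroup H) :
    charV χ = Set.range (charGpPullback χ) := by
  ext σ
  constructor
  · intro hσ
    refine ⟨AddMonoidHom.toMultiplicativeLeft
      (QuotientAddGroup.lift χ (AddMonoidHom.toMultiplicativeLeft.symm σ) fun x hx => ?_), rfl⟩
    simp [hσ x hx]
  · rintro ⟨τ, rfl⟩ x hx
    simp [charGpPullback, (QuotientAddGroup.eq_zero_iff x).2 hx]

lemma charV_subset_charV_iff {χ χ' : AddSubgroup H} : charV χ ⊆ charV χ' ↔ χ' ≤ χ := by
  refine ⟨fun h x hx => ?_, fun h ρ hρ x hx => hρ x (h hx)⟩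
  by_contra hxχ
  obtain ⟨τ, hτ⟩ := exists_charGp_apply_ne_one (mt (QuotientAddGroup.eq_zero_iff x).1 hxχ)
  have hτχ : charGpPullback χ τ ∈ charV χ := by
    rw [charV_eq_range_charGpPullback]
    exact ⟨τ, rfl⟩
  exact hτ (h hτχ x hx)

def zeroLocus (S : Set (AddMonoidAlgebra ℂ H)) : Set (CharGp H) :=
  {ρ | ∀ f ∈ S, evalAt ρ f = 0}

lemma evalAt_apply (ρ : CharGp H) (f : AddMonoidAlgebra ℂ H) :
    evalAt ρ f = f.coeff.sum fun x a => a * ρ (Multiplicative.ofAdd x) := by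
  simp [evalAt, AddMonoidAlgebra.lift_apply]

lemma evalAt_mapDomain {K : Type*} [AddCommGroup K] (φ : H →+ K) (τ : CharGp K)
    (f : AddMonoidAlgebra ℂ H) :
    evalAt τ (mapDomain φ f) = evalAt (τ.comp φ.toMultiplicative) f := by
  rw [evalAt_apply, evalAt_apply, AddMonoidAlgebra.mapDomain, AddMonoidAlgebra.coeff_ofCoeff,
    Finsupp.sum_mapDomain_index (by simp) (by simp [add_mul])]
  rfl

lemma eq_zero_of_forall_evalAt_eq_zero {g : AddMonoidAlgebra ℂ H}
    (h : ∀ ρ : CharGp H, evalAt ρ g = 0) : g = 0 := by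
  let e : H → (CharGp H →* ℂ) := fun x =>
    (Units.coeHom ℂ).comp (MonoidHom.eval (Multiplicative.ofAdd x))
  have he : Function.Injective e := by
    intro x y hxy
    by_contra hne
    obtain ⟨ρ, hρ⟩ := exists_charGp_apply_ne_one (sub_ne_zero.2 hne)
    have : ρ (Multiplicative.ofAdd x) = ρ (Multiplicative.ofAdd y) :=
      Units.ext (DFunLike.congr_fun hxy ρ)
    exact hρ (by rw [ofAdd_sub, map_div, this, div_self'])
  have hli := (linearIndependent_monoidHom (CharGp H) ℂ).comp e he
  rw [← AddMonoidAlgebra.coeff_eq_zero]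
  refine linearIndependent_iff.1 hli g.coeff (funext fun ρ => ?_)
  simpa [Finsupp.linearCombination_apply, evalAt_apply, Finsupp.sum, mul_comm, e] using h ρ

lemma forall_mem_charV_evalAt_eq_zero_iff (χ : AddSubgroup H) (g : AddMonoidAlgebra ℂ H) :
    (∀ σ ∈ charV χ, evalAt σ g = 0) ↔ mapDomain (QuotientAddGroup.mk' χ) g = 0 := by
  simp_rw [charV_eq_range_charGpPullback, Set.forall_mem_range, charGpPullback,
    ← evalAt_mapDomain]
  exact ⟨eq_zero_of_forall_evalAt_eq_zero, fun h τ => by rw [h, map_zero]⟩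

noncomputable def twist (η : CharGp H) (f : AddMonoidAlgebra ℂ H) : AddMonoidAlgebra ℂ H :=
  .ofCoeff <| Finsupp.onFinset f.coeff.support (fun x => f.coeff x * η (Multiplicative.ofAdd x))
    fun _ hx => Finsupp.mem_support_iff.2 (left_ne_zero_of_mul hx)

lemma support_twist_subset (η : CharGp H) (f : AddMonoidAlgebra ℂ H) :
    (twist η f).coeff.support ⊆ f.coeff.support := by
  rw [twist, AddMonoidAlgebra.coeff_ofCoeff]
  exact Finsupp.support_onFinset_subset

lemma evalAt_twist (η ρ : CharGp H) (f : AddMonoidAlgebra ℂ H) :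
    evalAt ρ (twist η f) = evalAt (η * ρ) f := by
  rw [evalAt_apply, evalAt_apply, twist, AddMonoidAlgebra.coeff_ofCoeff,
    Finsupp.onFinset_sum _ (by simp)]
  simp [Finsupp.sum, mul_assoc]

/-- Under `hdiff`, the cosets of `χ` and of `χ'` cut the support of `g` into the same pieces. -/
lemma mapDomain_mk'_eq_zero_of_le {χ χ' : AddSubgroup H} (hle : χ ≤ χ')
    {g : AddMonoidAlgebra ℂ H}
    (hdiff : ((g.coeff.support : Set H) - g.coeff.support) ∩ χ' ⊆ χ)
    (hg : mapDomain (QuotientAddGroup.mk' χ') g = 0) :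
    mapDomain (QuotientAddGroup.mk' χ) g = 0 := by
  classical
  set q := QuotientAddGroup.map χ χ' (AddMonoidHom.id H) hle
  set S := QuotientAddGroup.mk' χ '' g.coeff.support
  have hq : Set.InjOn q S := by
    rintro _ ⟨x, hx, rfl⟩ _ ⟨y, hy, rfl⟩ hxy
    refine QuotientAddGroup.eq_iff_sub_mem.2 (hdiff ⟨⟨x, hx, y, hy, rfl⟩, ?_⟩)
    exact QuotientAddGroup.eq_iff_sub_mem.1 hxy
  have hsupp : ((mapDomain (QuotientAddGroup.mk' χ) g).coeff.support : Set _) ⊆ S :=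
    (Finset.coe_subset.2 Finsupp.mapDomain_support).trans Finset.coe_image.subset
  rw [← AddMonoidAlgebra.coeff_eq_zero] at hg ⊢
  refine Finsupp.mapDomain_injOn S hq hsupp (by simp) ?_
  rw [Finsupp.mapDomain_zero, AddMonoidAlgebra.mapDomain, AddMonoidAlgebra.coeff_ofCoeff,
    ← Finsupp.mapDomain_comp]
  exact hg

def supportDiffs (F : Set (AddMonoidAlgebra ℂ H)) : Set H :=
  ⋃ f ∈ F, (f.coeff.support : Set H) - f.coeff.support

lemma supportDiffs_finite {F : Set (AddMonoidAlgebra ℂ H)} (hF : F.Finite) :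
    (supportDiffs F).Finite :=
  hF.biUnion fun f _ => f.coeff.support.finite_toSet.sub f.coeff.support.finite_toSet

lemma transTorus_subset_zeroLocus_iff (η : CharGp H) (χ : AddSubgroup H)
    (F : Set (AddMonoidAlgebra ℂ H)) :
    transTorus η χ ⊆ zeroLocus F ↔
      ∀ f ∈ F, mapDomain (QuotientAddGroup.mk' χ) (twist η f) = 0 := by
  simp_rw [← forall_mem_charV_evalAt_eq_zero_iff, evalAt_twist, transTorus,
    Set.image_subset_iff]
  exact ⟨fun h f hf σ hσ => h hσ f hf, fun h σ hσ f hf => h f hf σ hσ⟩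

/-- For the right-hand side `χ ≤ χ'`, `η V(χ) ⊆ Z(F)` still holds, so maximality forces
`χ = χ'`. -/
lemma eq_pclose_closure_supportDiffs_inter {F : Set (AddMonoidAlgebra ℂ H)} {η : CharGp H}
    (hη : IsOfFinOrder η) {χ' : AddSubgroup H} (hχ' : IsPrimitiveSub χ')
    (hmax : MaxTransTorusIn (transTorus η χ') (zeroLocus F)) :
    χ' = pclose (AddSubgroup.closure (supportDiffs F ∩ χ')) := by
  obtain ⟨-, hχ'F, hmaximal⟩ := hmax
  set χ := pclose (AddSubgroup.closure (supportDiffs F ∩ χ'))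
  have hle : χ ≤ χ' := hχ' ▸ pclose_mono ((AddSubgroup.closure_le _).2 Set.inter_subset_right)
  have hχF : transTorus η χ ⊆ zeroLocus F := by
    rw [transTorus_subset_zeroLocus_iff] at hχ'F ⊢
    refine fun f hf => mapDomain_mk'_eq_zero_of_le hle ?_ (hχ'F f hf)
    rintro _ ⟨hdiff, hmem⟩
    have hsub := support_twist_subset η f
    have hdiff' : _ ∈ supportDiffs F :=
      Set.mem_biUnion hf (Set.sub_subset_sub (Finset.coe_subset.2 hsub)
        (Finset.coe_subset.2 hsub) hdiff)
    exact le_pclose _ (AddSubgroup.subset_closure ⟨hdiff', hmem⟩)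
  have heq := hmaximal χ η (isPrimitiveSub_pclose _) hη
    (Set.image_mono (charV_subset_charV_iff.2 hle)) hχF
  have hV : charV χ = charV χ' := Set.image_injective.2 (mul_right_injective η) heq
  exact le_antisymm (charV_subset_charV_iff.1 hV.subset) hle

lemma zeroLocus_span (S : Set (AddMonoidAlgebra ℂ H)) :
    zeroLocus (Ideal.span S : Set (AddMonoidAlgebra ℂ H)) = zeroLocus S := by
  ext ρ
  exact Ideal.span_le (I := RingHom.ker (evalAt ρ))

lemma IsZarClosed.exists_finite_eq_zeroLocus [AddGroup.FG H] {W : Set (CharGp H)}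
    (hW : IsZarClosed W) : ∃ F : Set (AddMonoidAlgebra ℂ H), F.Finite ∧ W = zeroLocus F := by
  obtain ⟨S, rfl⟩ := hW
  have : AddMonoid.FG H := AddGroup.fg_iff_addMonoid_fg.1 ‹_›
  have : IsNoetherianRing (AddMonoidAlgebra ℂ H) := Algebra.FiniteType.isNoetherianRing ℂ _
  obtain ⟨F, hFfin, hF⟩ := Submodule.fg_def.1 (IsNoetherian.noetherian (Ideal.span S))
  change Ideal.span F = _ at hF
  refine ⟨F, hFfin, ?_⟩
  change zeroLocus S = _
  rw [← zeroLocus_span S, ← hF, zeroLocus_span]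

lemma nsmul_mem_of_card_detGroup_dvd {ξ : AddSubgroup H} {d : ℕ}
    (hdvd : Nat.card (detGroup ξ) ∣ d) {x : H} (hx : x ∈ pclose ξ) : d • x ∈ ξ := by
  obtain ⟨k, rfl⟩ := hdvd
  have h : (ξ.addSubgroupOf (pclose ξ)).index • (⟨x, hx⟩ : pclose ξ) ∈
      ξ.addSubgroupOf (pclose ξ) :=
    AddSubgroup.nsmul_index_mem _ _
  rw [mul_comm, mul_smul]
  exact ξ.nsmul_mem h k

lemma finite_setOf_forall_nsmul_mem {A : Type*} [AddCommGroup A] [AddGroup.FG A] {d : ℕ}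
    (hd : d ≠ 0) : {ζ : AddSubgroup A | ∀ a : A, d • a ∈ ζ}.Finite := by
  set N := (nsmulAddMonoidHom (α := A) d).range
  have : AddGroup.FG (A ⧸ N) := AddGroup.fg_of_surjective (QuotientAddGroup.mk'_surjective N)
  have : Finite (A ⧸ N) := AddCommGroup.finite_of_fg_isAddTorsion _ fun q => by
    induction q using QuotientAddGroup.induction_on with
    | H a =>
      refine isOfFinAddOrder_iff_nsmul_eq_zero.2 ⟨d, Nat.pos_of_ne_zero hd, ?_⟩
      rw [← QuotientAddGroup.mk_nsmul, QuotientAddGroup.eq_zero_iff]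
      exact ⟨a, rfl⟩
  refine (Set.finite_range (AddSubgroup.comap (QuotientAddGroup.mk' N))).subset fun ζ hζ => ?_
  refine ⟨ζ.map (QuotientAddGroup.mk' N), AddSubgroup.comap_map_eq_self ?_⟩
  rw [QuotientAddGroup.ker_mk']
  rintro _ ⟨a, rfl⟩
  exact hζ a

lemma finite_setOf_pclose_eq [AddGroup.FG H] (χ : AddSubgroup H) {d : ℕ} (hd : d ≠ 0) :
    {ξ : AddSubgroup H | pclose ξ = χ ∧ Nat.card (detGroup ξ) ∣ d}.Finite := by
  have : Module.Finite ℤ H := Module.Finite.iff_addGroup_fg.2 ‹_›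
  have : AddGroup.FG χ := Module.Finite.iff_addGroup_fg.1 (inferInstanceAs
    (Module.Finite ℤ χ.toIntSubmodule))
  refine Set.Finite.of_finite_image (f := fun ξ => ξ.addSubgroupOf χ)
    ((finite_setOf_forall_nsmul_mem (A := χ) hd).subset ?_) ?_
  · rintro _ ⟨ξ, ⟨rfl, hdvd⟩, rfl⟩ a
    exact AddSubgroup.mem_addSubgroupOf.2 (nsmul_mem_of_card_detGroup_dvd hdvd a.2)
  · rintro ξ₁ ⟨h₁, -⟩ ξ₂ ⟨h₂, -⟩ heq
    have := AddSubgroup.addSubgroupOf_inj.1 heq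
    rwa [inf_of_le_left (h₁ ▸ le_pclose ξ₁), inf_of_le_left (h₂ ▸ le_pclose ξ₂)] at this

end

/-- For a Zariski closed subset `W` of the character group of a finitely generated
abelian group, and every `d ≥ 1`, the collection `Ξ_d(W)` is finite. -/
theorem statement8 {H : Type*} [AddCommGroup H] [AddGroup.FG H]
    (W : Set (CharGp H)) (hW : IsZarClosed W) (d : ℕ) (hd : 1 ≤ d) :
    (Xi d W).Finite := by
  obtain ⟨F, hF, rfl⟩ := hW.exists_finite_eq_zeroLocus
  have hclosures :
      ((fun s => pclose (AddSubgroup.closure s)) '' (supportDiffs F).powerset).Finite :=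
    (supportDiffs_finite hF).finite_subsets.image _
  have hd₀ : d ≠ 0 := Nat.one_le_iff_ne_zero.1 hd
  refine (hclosures.biUnion fun χ _ => finite_setOf_pclose_eq χ hd₀).subset ?_
  rintro ξ ⟨-, hdvd, η, hη, -, -, -, hmax⟩
  have hξ := eq_pclose_closure_supportDiffs_inter hη (isPrimitiveSub_pclose ξ) hmax
  exact Set.mem_biUnion ⟨_, Set.inter_subset_left, hξ.symm⟩ ⟨rfl, hdvd⟩
end

section
/- Let H be a finitely generated abelian group of rank n and let 1 ≤ r ≤ n. The map sending the class [ν] of a surjective homomorphism ν : H → ℤʳ to the subspace P_ν = {f ∈ Hom(H, ℚ) : f(x) = 0 for all x ∈ ker ν} is a well-defined bijection from Γ(H, ℤʳ) = Epi(H, ℤʳ)/Aut(ℤʳ) onto the set of r-dimensional ℚ-linear subspaces of the ℚ-vector space Hom(H, ℚ). Moreover, for any subgroup ξ ≤ H, one has rank(ker ν + ξ) < rank H if and only if P_ν ∩ {f ∈ Hom(H, ℚ) : f(ξ) = 0} ≠ {0}. (Thus the set σ_{ℤʳ}(ξ) corresponds to the special Schubert variety of r-planes meeting the subspace (H/ξ)^∨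 ⊗ ℚ nontrivially.) -/
open scoped TensorProduct

/-- The annihilator of a subgroup `ξ ≤ H` inside `Hom(H, ℚ)`, a `ℚ`-subspace. -/
def annSub {H : Type*} [AddCommGroup H] (ξ : AddSubgroup H) :
    Submodule ℚ (H →ₗ[ℤ] ℚ) where
  carrier := {f | ∀ x ∈ ξ, f x = 0}
  add_mem' := by
    intro f g hf hg x hx
    simp [LinearMap.add_apply, hf x hx, hg x hx]
  zero_mem' := by intro x hx; simp
  smul_mem' := by
    intro c f hf x hx
    simp [LinearMap.smul_apply, hf x hx]

/-!
`Hom(H, ℚ)` is the `ℚ`-dual of `ℚ ⊗ H`, and the annihilator of a subgroup `S` is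
`Hom(H ⧸ S, ℚ)`, of dimension `rank H - rank S`. So the rank condition on `ker ν + ξ` says
exactly that its annihilator `P_ν ∩ ann ξ` is nonzero, and `P_ν` has dimension `r`.
Two epimorphisms onto `ℤʳ` are equivalent iff they have the same kernel, and since `ℤʳ` is
torsion-free the kernel is the common kernel of `P_ν`; hence injectivity. Conversely, for an
`r`-plane `W` with common kernel `K`, `H ⧸ K` embeds into `W^*`, so it is free of rank at most
`r`; since `W ⊆ ann K`, which has dimension `rank (H ⧸ K)`, the rank is `r`, `H ⧸ K ≅ ℤʳ` and
`W = ann K`.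
-/

open Module

lemma rkOf_eq_finrank (B : Type*) [AddCommGroup B] : rkOf B = finrank ℤ B :=
  (TensorProduct.isBaseChange ℤ B ℚ).finrank_eq

section IntHomRat

variable (M : Type*) [AddCommGroup M]

instance [Module.Finite ℤ M] : FiniteDimensional ℚ (M →ₗ[ℤ] ℚ) :=
  Module.Finite.equiv (LinearMap.liftBaseChangeEquiv ℚ).symm

lemma finrank_intHom_rat : finrank ℚ (M →ₗ[ℤ] ℚ) = finrank ℤ M := by
  rw [(LinearMap.liftBaseChangeEquiv ℚ).finrank_eq, Subspace.dual_finrank_eq,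
    (TensorProduct.isBaseChange ℤ M ℚ).finrank_eq]

variable {M} in
lemma finrank_int_le_of_injective [Module.Finite ℤ M] {V : Type*} [AddCommGroup V] [Module ℚ V]
    [FiniteDimensional ℚ V] (φ : M →ₗ[ℤ] V) (hφ : Function.Injective φ) :
    finrank ℤ M ≤ finrank ℚ V := by
  rw [IsLocalization.finrank_eq ℚ (nonZeroDivisors ℤ) le_rfl]
  refine finrank_le_finrank_of_rank_le_rank (LinearMap.lift_rank_le_of_injective φ hφ) ?_
  rw [← IsLocalization.rank_eq ℚ (nonZeroDivisors ℤ) le_rfl]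
  exact Module.rank_lt_aleph0 ℚ V

end IntHomRat

section Annihilator

variable {H : Type*} [AddCommGroup H]

lemma mem_annSub_iff_le_ker (S : AddSubgroup H) (f : H →ₗ[ℤ] ℚ) :
    f ∈ annSub S ↔ S ≤ f.toAddMonoidHom.ker :=
  Iff.rfl

lemma annSub_sup (K ξ : AddSubgroup H) : annSub (K ⊔ ξ) = annSub K ⊓ annSub ξ := by
  ext f
  simp only [Submodule.mem_inf, mem_annSub_iff_le_ker, sup_le_iff]

lemma range_lcomp_mkQ (S : AddSubgroup H) :
    LinearMap.range (LinearMap.lcomp ℚ ℚ S.toIntSubmodule.mkQ) = annSub S := by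
  ext f
  constructor
  · rintro ⟨g, rfl⟩ x hx
    simp [(Submodule.Quotient.mk_eq_zero S.toIntSubmodule (x := x)).2 hx]
  · exact fun hf => ⟨S.toIntSubmodule.liftQ f hf, rfl⟩

noncomputable def quotientHomEquivAnnSub (S : AddSubgroup H) :
    (H ⧸ S.toIntSubmodule →ₗ[ℤ] ℚ) ≃ₗ[ℚ] annSub S :=
  (LinearEquiv.ofInjective _ (LinearMap.lcomp_injective_of_surjective _
      S.toIntSubmodule.mkQ_surjective)).trans
    (LinearEquiv.ofEq _ _ (range_lcomp_mkQ S))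

lemma finrank_annSub (S : AddSubgroup H) :
    finrank ℚ (annSub S) = finrank ℤ (H ⧸ S.toIntSubmodule) :=
  (quotientHomEquivAnnSub S).finrank_eq.symm.trans (finrank_intHom_rat _)

lemma finrank_annSub_ker {r : ℕ} (ν : H →+ (Fin r → ℤ)) (hν : Function.Surjective ν) :
    finrank ℚ (annSub ν.ker) = r := by
  rw [finrank_annSub]
  change finrank ℤ (H ⧸ LinearMap.ker ν.toIntLinearMap) = r
  rw [(ν.toIntLinearMap.quotKerEquivOfSurjective hν).finrank_eq]
  simp

variable [Module.Finite ℤ H]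

lemma finrank_annSub_add_finrank (S : AddSubgroup H) :
    finrank ℚ (annSub S) + finrank ℤ S = finrank ℤ H := by
  rw [finrank_annSub]
  exact S.toIntSubmodule.finrank_quotient_add_finrank

lemma rkOf_lt_iff_annSub_ne_bot (S : AddSubgroup H) : rkOf S < rkOf H ↔ annSub S ≠ ⊥ := by
  rw [rkOf_eq_finrank, rkOf_eq_finrank, Ne, ← Submodule.finrank_eq_zero,
    ← finrank_annSub_add_finrank S]
  omega

end Annihilator

lemma mem_ker_iff_forall_annSub {H ι : Type*} [AddCommGroup H] (ν : H →+ (ι → ℤ)) (x : H) :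
    x ∈ ν.ker ↔ ∀ f ∈ annSub ν.ker, f x = 0 := by
  refine ⟨fun hx f hf => hf x hx, fun hx => funext fun i => ?_⟩
  let f : H →ₗ[ℤ] ℚ := ((Int.castAddHom ℚ).comp ((Pi.evalAddMonoidHom _ i).comp ν)).toIntLinearMap
  have hf : f ∈ annSub ν.ker := fun y hy => by simp [f, show ν y = 0 from hy]
  have hfx : ((ν x i : ℤ) : ℚ) = 0 := hx f hf
  exact_mod_cast hfx

lemma ker_eq_of_annSub_eq {H ι : Type*} [AddCommGroup H] (ν₁ ν₂ : H →+ (ι → ℤ))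
    (h : annSub ν₁.ker = annSub ν₂.ker) : ν₁.ker = ν₂.ker := by
  ext x
  rw [mem_ker_iff_forall_annSub, mem_ker_iff_forall_annSub, h]

lemma gammaRel_iff_ker_eq {G A : Type*} [AddGroup G] [AddGroup A] (ν₁ ν₂ : EpiSet G A) :
    GammaRel G A ν₁ ν₂ ↔ ν₁.1.ker = ν₂.1.ker := by
  constructor
  · rintro ⟨α, hα⟩
    ext x
    rw [AddMonoidHom.mem_ker, AddMonoidHom.mem_ker, ← hα x, AddEquiv.map_eq_zero_iff]
  · intro h
    let e₁ := QuotientAddGroup.quotientKerEquivOfSurjective _ ν₁.2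
    let e₂ := QuotientAddGroup.quotientKerEquivOfSurjective _ ν₂.2
    refine ⟨e₁.symm.trans ((QuotientAddGroup.quotientAddEquivOfEq h).trans e₂), fun g => ?_⟩
    have hg : e₁.symm (ν₁.1 g) = g := e₁.symm_apply_eq.2 rfl
    simp only [AddEquiv.trans_apply, hg]
    rfl

lemma exists_surjective_annSub_ker_eq {H : Type*} [AddCommGroup H] [Module.Finite ℤ H] {r : ℕ}
    (W : Submodule ℚ (H →ₗ[ℤ] ℚ)) (hW : finrank ℚ W = r) :
    ∃ ν : H →+ (Fin r → ℤ), Function.Surjective ν ∧ annSub ν.ker = W := by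
  -- `F x` is evaluation at `x`, so `ker F` is the common kernel of the elements of `W`
  let F : H →ₗ[ℤ] Module.Dual ℚ W :=
    ((LinearMap.lcomp ℚ ℚ W.subtype).toAddMonoidHom.comp (LinearMap.applyₗ' ℚ)).toIntLinearMap
  let K : AddSubgroup H := (LinearMap.ker F).toAddSubgroup
  have hWK : W ≤ annSub K := fun f hf x hx => LinearMap.congr_fun hx ⟨f, hf⟩
  have : Module.IsTorsionFree ℤ (Module.Dual ℚ W) := .trans_faithfulSMul ℤ ℚ _
  have : Module.Free ℤ (LinearMap.range F) := Module.free_of_finite_type_torsion_free'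
  have hrank : finrank ℤ (LinearMap.range F) = r := by
    apply le_antisymm
    · rw [← hW, ← Subspace.dual_finrank_eq]
      exact finrank_int_le_of_injective (LinearMap.range F).subtype Subtype.val_injective
    · rw [← hW, ← F.quotKerEquivRange.finrank_eq]
      exact (Submodule.finrank_mono hWK).trans_eq (finrank_annSub K)
  let e := (Module.finBasisOfFinrankEq ℤ _ hrank).equivFun
  let ν : H →ₗ[ℤ] (Fin r → ℤ) := e.toLinearMap ∘ₗ F.rangeRestrict
  have hker : ν.toAddMonoidHom.ker = K := by
    ext x
    change ν x = 0 ↔ F x = 0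
    simp [ν, Subtype.ext_iff]
  have hν : Function.Surjective ν := e.surjective.comp F.surjective_rangeRestrict
  refine ⟨ν.toAddMonoidHom, hν, ?_⟩
  rw [hker]
  refine (Submodule.eq_of_le_of_finrank_le hWK ?_).symm
  rw [hW, ← hker]
  exact (finrank_annSub_ker _ hν).le

theorem statement9_general {H : Type*} [AddCommGroup H] [AddGroup.FG H] (r : ℕ) :
    (∃ Φ : GammaSet H (Fin r → ℤ) → Submodule ℚ (H →ₗ[ℤ] ℚ),
      (∀ ν : EpiSet H (Fin r → ℤ),
        Φ (Quot.mk _ ν) = annSub ((ν.1.ker : AddSubgroup H))) ∧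
      Function.Injective Φ ∧
      Set.range Φ = {W : Submodule ℚ (H →ₗ[ℤ] ℚ) | Module.finrank ℚ W = r}) ∧
    ∀ (ν : EpiSet H (Fin r → ℤ)) (ξ : AddSubgroup H),
      rkOf ↥(ν.1.ker ⊔ ξ) < rkOf H ↔ annSub (ν.1.ker) ⊓ annSub ξ ≠ ⊥ := by
  refine ⟨⟨Quot.lift (fun ν => annSub ν.1.ker) fun ν₁ ν₂ h => by
      rw [(gammaRel_iff_ker_eq ν₁ ν₂).1 h], fun _ => rfl, ?_, ?_⟩, fun ν ξ => ?_⟩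
  · rintro ⟨ν₁⟩ ⟨ν₂⟩ h
    exact Quot.sound ((gammaRel_iff_ker_eq ν₁ ν₂).2 (ker_eq_of_annSub_eq ν₁.1 ν₂.1 h))
  · ext W
    constructor
    · rintro ⟨⟨ν⟩, rfl⟩
      exact finrank_annSub_ker ν.1 ν.2
    · intro hW
      obtain ⟨ν, hν, hνW⟩ := exists_surjective_annSub_ker_eq W hW
      exact ⟨Quot.mk _ ⟨ν, hν⟩, hνW⟩
  · rw [← annSub_sup]
    exact rkOf_lt_iff_annSub_ne_bot _

/-- `Γ(H, ℤʳ)` is the Grassmannian of `r`-planes in `Hom(H,ℚ)`, via `[ν] ↦ P_ν`;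
moreover `rank(ker ν + ξ) < rank H` iff `P_ν` meets the annihilator of `ξ` nontrivially. -/
theorem statement9 {H : Type*} [AddCommGroup H] [AddGroup.FG H] (n r : ℕ)
    (hn : rkOf H = n) (hr1 : 1 ≤ r) (hrn : r ≤ n) :
    (∃ Φ : GammaSet H (Fin r → ℤ) → Submodule ℚ (H →ₗ[ℤ] ℚ),
      (∀ ν : EpiSet H (Fin r → ℤ),
        Φ (Quot.mk _ ν) = annSub ((ν.1.ker : AddSubgroup H))) ∧
      Function.Injective Φ ∧
      Set.range Φ = {W : Submodule ℚ (H →ₗ[ℤ] ℚ) | Module.finrank ℚ W = r}) ∧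
    ∀ (ν : EpiSet H (Fin r → ℤ)) (ξ : AddSubgroup H),
      rkOf ↥(ν.1.ker ⊔ ξ) < rkOf H ↔ annSub (ν.1.ker) ⊓ annSub ξ ≠ ⊥ :=
  statement9_general r
end

section
/- Let H be a finitely generated abelian group with character group Ĥ, and let ξ, χ ≤ H be subgroups such that the determinant group ξ̄/ξ is cyclic. Let η ∈ Ĥ be any character satisfying η(x) = 1 for all x ∈ ξ and {x ∈ ξ̄ : η(x) = 1} = ξ (i.e., η restricts to a generator of the character group of ξ̄/ξ). Then the following are equivalent: (a) χ ∩ ξ̄ ⊆ ξ; (b) there exists ρ ∈ Ĥ with ρ(x) = 1 for all x ∈ χ and (η⁻¹ρ)(y) = 1 for all y ∈ ξ̄, i.e., V(χ) ∩ ηV(ξ̄) ≠ ∅; (c) η(z) = 1 for all z ∈ χ ∩ ξ̄. In particular, the validity of (b) and (c) does not depend on the choice of η with the stated property. -/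
open scoped TensorProduct Pointwise

open Function

/-! Both nontrivial directions come down to extending characters: `ℂˣ` is a divisible group,
hence an injective `ℤ`-module, so a character of `ξ̄` that is trivial on `χ ∩ ξ̄` extends to a
character of `H` that is trivial on `χ`. Such an extension is exactly a point of
`V(χ) ∩ ηV(ξ̄)`, and the hypotheses on `η` say that `η` is trivial on an element of `ξ̄`
exactly when that element lies in `ξ`. -/

theorem Complex.units_zpow_surjective {n : ℤ} (hn : n ≠ 0) :
    Surjective fun u : ℂˣ => u ^ n := by
  intro u
  refine ⟨Units.mk0 (exp (log u / n)) (exp_ne_zero _), Units.ext ?_⟩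
  rw [Units.val_zpow_eq_zpow_val, Units.val_mk0, ← exp_int_mul,
    mul_div_cancel₀ _ (Int.cast_ne_zero.mpr hn), exp_log u.ne_zero]

noncomputable instance : DivisibleBy (Additive ℂˣ) ℤ :=
  divisibleByOfSMulRightSurj _ _ fun hn => Complex.units_zpow_surjective hn

theorem AddMonoidHom.exists_extension_of_divisible {H A : Type*} [AddCommGroup H]
    [AddCommGroup A] [DivisibleBy A ℤ] {K : AddSubgroup H} (χ : AddSubgroup H) (f : K →+ A)
    (hf : ∀ x : K, (x : H) ∈ χ → f x = 0) :
    ∃ g : H →+ A, (∀ x ∈ χ, g x = 0) ∧ ∀ x : K, g x = f x := by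
  -- `f` factors through `K ⧸ (χ ⊓ K)`, which embeds in `H ⧸ χ`; extend it there by Baer.
  let π : K →+ H ⧸ χ := (QuotientAddGroup.mk' χ).comp K.subtype
  have hker : π.ker ≤ f.ker := fun x hx =>
    hf x ((QuotientAddGroup.eq_zero_iff _).mp hx)
  obtain ⟨g, hg⟩ := (Module.Baer.of_divisible A).extension_property_addMonoidHom
    (QuotientAddGroup.kerLift π) (QuotientAddGroup.kerLift_injective π)
    (QuotientAddGroup.lift π.ker f hker)
  refine ⟨g.comp (QuotientAddGroup.mk' χ), fun x hx => ?_, fun x =>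
    DFunLike.congr_fun hg (x : K ⧸ π.ker)⟩
  simp [(QuotientAddGroup.eq_zero_iff x).mpr hx]

theorem mem_transTorus_iff {H : Type*} [AddCommGroup H] {η ρ : CharGp H} {K : AddSubgroup H} :
    ρ ∈ transTorus η K ↔ ∀ x ∈ K, ρ (Multiplicative.ofAdd x) = η (Multiplicative.ofAdd x) := by
  constructor
  · rintro ⟨σ, hσ, rfl⟩ x hx
    simp [hσ x hx]
  · intro h
    exact ⟨η⁻¹ * ρ, fun x hx => by simp [h x hx], mul_inv_cancel_left η ρ⟩

theorem charV_inter_transTorus_nonempty_iff {H : Type*} [AddCommGroup H] (η : CharGp H)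
    (χ K : AddSubgroup H) :
    (charV χ ∩ transTorus η K).Nonempty ↔ ∀ z ∈ χ ⊓ K, η (Multiplicative.ofAdd z) = 1 := by
  constructor
  · rintro ⟨ρ, hρχ, hρK⟩ z hz
    rw [← mem_transTorus_iff.mp hρK z hz.2]
    exact hρχ z hz.1
  · intro hη
    let ψ : K →+ Additive ℂˣ := (MonoidHom.toAdditiveRight η).comp K.subtype
    obtain ⟨g, hgχ, hgK⟩ := ψ.exists_extension_of_divisible χ fun x hx => by
      simp [ψ, hη x ⟨hx, x.2⟩]
    refine ⟨AddMonoidHom.toMultiplicativeLeft g, fun x hx => by simp [hgχ x hx],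
      mem_transTorus_iff.mpr fun x hx => ?_⟩
    simpa [ψ] using congrArg Additive.toMul (hgK ⟨x, hx⟩)

theorem statement11_general {H : Type*} [AddCommGroup H]
    (ξ χ : AddSubgroup H) (η : CharGp H)
    (hη1 : ∀ x ∈ ξ, η (Multiplicative.ofAdd x) = 1)
    (hη2 : {x : H | x ∈ pclose ξ ∧ η (Multiplicative.ofAdd x) = 1} = (ξ : Set H)) :
    ((χ ⊓ pclose ξ ≤ ξ) ↔ (charV χ ∩ transTorus η (pclose ξ)).Nonempty) ∧
    ((χ ⊓ pclose ξ ≤ ξ) ↔ ∀ z ∈ χ ⊓ pclose ξ, η (Multiplicative.ofAdd z) = 1) := by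
  have hac : χ ⊓ pclose ξ ≤ ξ ↔ ∀ z ∈ χ ⊓ pclose ξ, η (Multiplicative.ofAdd z) = 1 :=
    ⟨fun h z hz => hη1 z (h hz), fun h z hz => by
      rw [← SetLike.mem_coe, ← hη2]
      exact ⟨hz.2, h z hz⟩⟩
  exact ⟨hac.trans (charV_inter_transTorus_nonempty_iff η χ (pclose ξ)).symm, hac⟩

/-- For a subgroup `ξ` with cyclic determinant group and a character `η` restricting to
a generator of the character group of `ξ̄/ξ`, the conditions (a) `χ ∩ ξ̄ ⊆ ξ`,
(b) `V(χ) ∩ ηV(ξ̄) ≠ ∅`, and (c) `η` vanishes on `χ ∩ ξ̄`, are equivalent. -/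
theorem statement11 {H : Type*} [AddCommGroup H] [AddGroup.FG H]
    (ξ χ : AddSubgroup H) (hcyc : IsAddCyclic (detGroup ξ)) (η : CharGp H)
    (hη1 : ∀ x ∈ ξ, η (Multiplicative.ofAdd x) = 1)
    (hη2 : {x : H | x ∈ pclose ξ ∧ η (Multiplicative.ofAdd x) = 1} = (ξ : Set H)) :
    ((χ ⊓ pclose ξ ≤ ξ) ↔ (charV χ ∩ transTorus η (pclose ξ)).Nonempty) ∧
    ((χ ⊓ pclose ξ ≤ ξ) ↔ ∀ z ∈ χ ⊓ pclose ξ, η (Multiplicative.ofAdd z) = 1) :=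
  statement11_general ξ χ η hη1 hη2
end
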